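/- Fix p < -1 and α with 0 < α < 1. Then lim_{r → +∞} Θ_p{α, r} = π/2. -/

import Mathlib

/-!
With the weight `w = (s^{2p} - r^{2p}) / (1 - r^{2p}) ∈ [0, 1]` one has
`F_p = r² - s² - (1 - α²)(r² - 1) w - α² (r² - s²) / s²`. Convexity of `x ↦ x^{p+1}` on the
chord from `1` to `r²` gives `(r² - 1) w ≤ (r² - s²) / s²`, hence on `[1, r]`
`(s² - 1)(r² - s²) / s² ≤ F_p ≤ r² - s²`.
Both bounds integrate in closed form through `arcsin`, giving
`π/2 - arcsin (1/r) ≤ Θ_p{α, r} ≤ π/2`, and the limit follows by squeezing.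
-/

open Real Filter

/-- `F_p(s, α, r) = ((1 - s^{2p})/(1 - r^{2p}))(r² + α²)
  + ((s^{2p} - r^{2p})/(1 - r^{2p}))(1 + α² r²) - s² - α² r² s⁻²`. -/
noncomputable def Fp (p α r s : ℝ) : ℝ :=
  (1 - s ^ (2 * p)) / (1 - r ^ (2 * p)) * (r ^ 2 + α ^ 2) +
  (s ^ (2 * p) - r ^ (2 * p)) / (1 - r ^ (2 * p)) * (1 + α ^ 2 * r ^ 2) -
  s ^ 2 - α ^ 2 * r ^ 2 * s ^ (-2 : ℝ)

/-- The period function `Θ_p{α, r} = ∫_1^r ds / √(F_p(s, α, r))`. -/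
noncomputable def Theta (p α r : ℝ) : ℝ :=
  ∫ s in (1 : ℝ)..r, (Real.sqrt (Fp p α r s))⁻¹

open Set MeasureTheory Topology

lemma convexOn_rpow_of_nonpos {q : ℝ} (hq : q ≤ 0) :
    ConvexOn ℝ (Ioi 0) fun x : ℝ ↦ x ^ q := by
  have hlog : ConvexOn ℝ (Ioi 0) fun x ↦ -q • -log x :=
    strictConcaveOn_log_Ioi.concaveOn.neg.smul (neg_nonneg.2 hq)
  have himage : Convex ℝ ((fun x ↦ -q • -log x) '' Ioi 0) :=
    (isPreconnected_Ioi.image _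
      ((continuousOn_log.mono fun _ hx ↦ ne_of_gt hx).neg.const_smul (-q))).ordConnected.convex
  refine ((convexOn_exp.subset (subset_univ _) himage).comp hlog
    (exp_monotone.monotoneOn _)).congr fun x hx ↦ ?_
  simp [rpow_def_of_pos (mem_Ioi.1 hx), mul_comm]

lemma sub_one_mul_rpow_sub_rpow_mul_le {p a b : ℝ} (hp : p ≤ -1) (ha : 1 ≤ a) (hab : a ≤ b) :
    (b - 1) * (a ^ p - b ^ p) * a ≤ (b - a) * (1 - b ^ p) := by
  obtain rfl | hb := (ha.trans hab).eq_or_lt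
  · obtain rfl : a = 1 := le_antisymm hab ha
    simp
  have ha₀ : 0 < a := by linarith
  have hb₀ : 0 < b := by linarith
  have hw₁ : 0 ≤ (b - a) / (b - 1) := div_nonneg (sub_nonneg.2 hab) (sub_nonneg.2 hb.le)
  have hw₂ : 0 ≤ (a - 1) / (b - 1) := div_nonneg (sub_nonneg.2 ha) (sub_nonneg.2 hb.le)
  have hsum : (b - a) / (b - 1) + (a - 1) / (b - 1) = 1 := by field_simp; ring
  have hcomb : (b - a) / (b - 1) * 1 + (a - 1) / (b - 1) * b = a := by field_simp; ring
  have hchord := (convexOn_rpow_of_nonpos (q := p + 1) (by linarith)).2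
    (mem_Ioi.2 one_pos) (mem_Ioi.2 hb₀) hw₁ hw₂ hsum
  simp only [smul_eq_mul, hcomb, one_rpow, rpow_add_one ha₀.ne', rpow_add_one hb₀.ne'] at hchord
  have := mul_le_mul_of_nonneg_right hchord (sub_nonneg.2 hb.le)
  field_simp at this
  linear_combination this

/-- `Fp p α r s = (1 - w) (r² + α²) + w (1 + α² r²) - s² - α² r² s⁻²` with `w = weight p r s`,
which decreases from `1` at `s = 1` to `0` at `s = r`. -/
noncomputable def weight (p r s : ℝ) : ℝ := (s ^ (2 * p) - r ^ (2 * p)) / (1 - r ^ (2 * p))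

/-- `Fp` at `α = 1`, where it no longer depends on `p`. -/
noncomputable def F₁ (r s : ℝ) : ℝ := (s ^ 2 - 1) * (r ^ 2 - s ^ 2) / s ^ 2

section

variable {p α r s : ℝ}

lemma rpow_two_mul_lt_one (hp : p < 0) (hr : 1 < r) : r ^ (2 * p) < 1 :=
  rpow_lt_one_of_one_lt_of_neg hr (by linarith)

lemma Fp_eq (hp : p < 0) (hr : 1 < r) (hs : 0 < s) :
    Fp p α r s = r ^ 2 - s ^ 2 - (1 - α ^ 2) * (r ^ 2 - 1) * weight p r s
      - α ^ 2 * (r ^ 2 - s ^ 2) / s ^ 2 := by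
  have h : 1 - r ^ (2 * p) ≠ 0 := (sub_pos.2 (rpow_two_mul_lt_one hp hr)).ne'
  rw [Fp, weight, rpow_neg hs.le, rpow_two]
  field_simp
  ring

lemma weight_nonneg (hp : p < 0) (hr : 1 < r) (hs : 0 < s) (hsr : s ≤ r) : 0 ≤ weight p r s :=
  div_nonneg (sub_nonneg.2 (rpow_le_rpow_of_nonpos hs hsr (by linarith)))
    (sub_nonneg.2 (rpow_two_mul_lt_one hp hr).le)

lemma sq_sub_one_mul_weight_le (hp : p ≤ -1) (hr : 1 < r) (hs : 1 ≤ s) (hsr : s ≤ r) :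
    (r ^ 2 - 1) * weight p r s ≤ (r ^ 2 - s ^ 2) / s ^ 2 := by
  have hs₀ : 0 < s := by linarith
  have hsq : ∀ x : ℝ, 0 ≤ x → (x ^ 2) ^ p = x ^ (2 * p) := fun x hx ↦ by
    rw [rpow_mul hx, rpow_two]
  have h := sub_one_mul_rpow_sub_rpow_mul_le (b := r ^ 2) hp (one_le_pow₀ hs) (by gcongr)
  rw [hsq s hs₀.le, hsq r (by linarith)] at h
  have h₁ : 0 < 1 - r ^ (2 * p) := sub_pos.2 (rpow_two_mul_lt_one (by linarith) hr)
  rw [weight, mul_div_assoc', div_le_div_iff₀ h₁ (by positivity)]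
  linarith

lemma F₁_le_Fp (hp : p ≤ -1) (hα : α ^ 2 ≤ 1) (hr : 1 < r) (hs : 1 ≤ s) (hsr : s ≤ r) :
    F₁ r s ≤ Fp p α r s := by
  have hs₀ : 0 < s := by linarith
  have h := mul_le_mul_of_nonneg_left (sq_sub_one_mul_weight_le hp hr hs hsr)
    (sub_nonneg.2 hα)
  have hF₁ : F₁ r s = r ^ 2 - s ^ 2 - (r ^ 2 - s ^ 2) / s ^ 2 := by
    rw [F₁]; field_simp
  rw [Fp_eq (by linarith) hr hs₀, hF₁, mul_div_assoc]
  linarith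

lemma Fp_le_sq_sub_sq (hp : p < 0) (hα : α ^ 2 ≤ 1) (hr : 1 < r) (hs : 0 < s) (hsr : s ≤ r) :
    Fp p α r s ≤ r ^ 2 - s ^ 2 := by
  have h₁ : 0 ≤ (1 - α ^ 2) * (r ^ 2 - 1) * weight p r s :=
    mul_nonneg (mul_nonneg (sub_nonneg.2 hα) (by nlinarith)) (weight_nonneg hp hr hs hsr)
  have h₂ : 0 ≤ α ^ 2 * (r ^ 2 - s ^ 2) / s ^ 2 := by
    have : s ^ 2 ≤ r ^ 2 := by gcongr
    positivity
  rw [Fp_eq hp hr hs]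
  linarith

lemma F₁_pos (hs : 1 < s) (hsr : s < r) : 0 < F₁ r s := by
  have h₁ : 1 < s ^ 2 := one_lt_pow₀ hs two_ne_zero
  have h₂ : s ^ 2 < r ^ 2 := by gcongr
  exact div_pos (mul_pos (by linarith) (by linarith)) (by positivity)

end

lemma intervalIntegrable_and_integral_eq_sub_of_deriv_nonneg {g g' : ℝ → ℝ} {a b : ℝ}
    (hab : a ≤ b) (hcont : ContinuousOn g (Icc a b))
    (hderiv : ∀ x ∈ Ioo a b, HasDerivAt g (g' x) x) (hpos : ∀ x ∈ Ioo a b, 0 ≤ g' x) :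
    IntervalIntegrable g' volume a b ∧ ∫ x in a..b, g' x = g b - g a := by
  have hint : IntervalIntegrable g' volume a b :=
    (intervalIntegrable_iff_integrableOn_Ioc_of_le hab).2
      (intervalIntegral.integrableOn_deriv_of_nonneg hcont hderiv hpos)
  exact ⟨hint, intervalIntegral.integral_eq_sub_of_hasDerivAt_of_le hab hcont hderiv hint⟩

lemma IntervalIntegrable.of_norm_le_on_Ioo {f g : ℝ → ℝ} {a b : ℝ} (hab : a ≤ b)
    (hg : IntervalIntegrable g volume a b) (hf : AEStronglyMeasurable f volume)
    (hle : ∀ x ∈ Ioo a b, ‖f x‖ ≤ g x) : IntervalIntegrable f volume a b := by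
  rw [intervalIntegrable_iff_integrableOn_Ioo_of_le hab] at hg ⊢
  exact hg.mono' hf.restrict ((ae_restrict_iff' measurableSet_Ioo).2 (ae_of_all _ hle))

lemma hasDerivAt_arcsin_div {r s : ℝ} (hr : 0 < r) (hs : -r < s) (hsr : s < r) :
    HasDerivAt (fun x ↦ arcsin (x / r)) (√(r ^ 2 - s ^ 2))⁻¹ s := by
  have h₁ : -1 < s / r := by rw [lt_div_iff₀ hr]; linarith
  have h₂ : s / r < 1 := by rw [div_lt_one hr]; exact hsr
  refine ((hasDerivAt_arcsin h₁.ne' h₂.ne).comp s ((hasDerivAt_id s).div_const r)).congr_deriv ?_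
  have : r ^ 2 - s ^ 2 = r ^ 2 * (1 - (s / r) ^ 2) := by field_simp
  rw [this, sqrt_mul (sq_nonneg r), sqrt_sq hr.le]
  field_simp

lemma integral_inv_sqrt_sq_sub_sq {r a : ℝ} (hr : 0 < r) (ha : -r ≤ a) (har : a ≤ r) :
    IntervalIntegrable (fun s ↦ (√(r ^ 2 - s ^ 2))⁻¹) volume a r ∧
      ∫ s in a..r, (√(r ^ 2 - s ^ 2))⁻¹ = π / 2 - arcsin (a / r) := by
  have h := intervalIntegrable_and_integral_eq_sub_of_deriv_nonneg har
    (by fun_prop : ContinuousOn (fun x ↦ arcsin (x / r)) (Icc a r))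
    (fun x hx ↦ hasDerivAt_arcsin_div hr (by linarith [hx.1]) hx.2)
    (fun _ _ ↦ by positivity)
  rwa [div_self hr.ne', arcsin_one] at h

lemma hasDerivAt_arcsin_F₁ {r s : ℝ} (hs : 1 < s) (hsr : s < r) :
    HasDerivAt (fun x ↦ arcsin ((2 * x ^ 2 - 1 - r ^ 2) / (r ^ 2 - 1)) / 2)
      (√(F₁ r s))⁻¹ s := by
  have hr : 0 < r ^ 2 - 1 := by nlinarith
  have hs₀ : 0 < s := by linarith
  have h₁ : -1 < (2 * s ^ 2 - 1 - r ^ 2) / (r ^ 2 - 1) := by rw [lt_div_iff₀ hr]; nlinarith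
  have h₂ : (2 * s ^ 2 - 1 - r ^ 2) / (r ^ 2 - 1) < 1 := by rw [div_lt_one hr]; nlinarith
  have hinner : HasDerivAt (fun x ↦ (2 * x ^ 2 - 1 - r ^ 2) / (r ^ 2 - 1))
      (4 * s / (r ^ 2 - 1)) s := by
    refine (((((hasDerivAt_pow 2 s).const_mul 2).sub_const 1).sub_const (r ^ 2)).div_const
      (r ^ 2 - 1)).congr_deriv ?_
    push_cast
    ring
  refine (((hasDerivAt_arcsin h₁.ne' h₂.ne).comp s hinner).div_const 2).congr_deriv ?_
  have hfac : 1 - ((2 * s ^ 2 - 1 - r ^ 2) / (r ^ 2 - 1)) ^ 2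
      = (2 * s / (r ^ 2 - 1)) ^ 2 * F₁ r s := by
    rw [F₁]; field_simp; ring
  have hF := F₁_pos hs hsr
  rw [hfac, sqrt_mul (sq_nonneg _), sqrt_sq (by positivity)]
  field_simp
  ring

lemma integral_inv_sqrt_F₁ {r : ℝ} (hr : 1 < r) :
    IntervalIntegrable (fun s ↦ (√(F₁ r s))⁻¹) volume 1 r ∧
      ∫ s in (1 : ℝ)..r, (√(F₁ r s))⁻¹ = π / 2 := by
  have h := intervalIntegrable_and_integral_eq_sub_of_deriv_nonneg hr.le
    (by fun_prop : ContinuousOn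
      (fun x ↦ arcsin ((2 * x ^ 2 - 1 - r ^ 2) / (r ^ 2 - 1)) / 2) (Icc 1 r))
    (fun x hx ↦ hasDerivAt_arcsin_F₁ hx.1 hx.2) (fun _ _ ↦ by positivity)
  have hr' : r ^ 2 - 1 ≠ 0 := by nlinarith
  have e₁ : (2 * r ^ 2 - 1 - r ^ 2) / (r ^ 2 - 1) = 1 := by rw [div_eq_one_iff_eq hr']; ring
  have e₂ : (2 * 1 ^ 2 - 1 - r ^ 2) / (r ^ 2 - 1) = -1 := by rw [div_eq_iff hr']; ring
  rw [e₁, e₂, arcsin_one, arcsin_neg_one] at h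
  exact ⟨h.1, by rw [h.2]; ring⟩

section

variable {p α r : ℝ}

lemma intervalIntegrable_inv_sqrt_Fp (hp : p ≤ -1) (hα : α ^ 2 ≤ 1) (hr : 1 < r) :
    IntervalIntegrable (fun s ↦ (√(Fp p α r s))⁻¹) volume 1 r := by
  refine (integral_inv_sqrt_F₁ hr).1.of_norm_le_on_Ioo hr.le
    (by unfold Fp; fun_prop : Measurable fun s ↦ (√(Fp p α r s))⁻¹).aestronglyMeasurable
    fun s hs ↦ ?_
  rw [norm_inv, norm_of_nonneg (sqrt_nonneg _)]
  exact inv_anti₀ (sqrt_pos.2 (F₁_pos hs.1 hs.2))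
    (sqrt_le_sqrt (F₁_le_Fp hp hα hr hs.1.le hs.2.le))

lemma Theta_le_pi_div_two (hp : p ≤ -1) (hα : α ^ 2 ≤ 1) (hr : 1 < r) :
    Theta p α r ≤ π / 2 := by
  obtain ⟨hint, hval⟩ := integral_inv_sqrt_F₁ hr
  rw [← hval, Theta]
  refine intervalIntegral.integral_mono_on_of_le_Ioo hr.le
    (intervalIntegrable_inv_sqrt_Fp hp hα hr) hint fun s hs ↦ ?_
  exact inv_anti₀ (sqrt_pos.2 (F₁_pos hs.1 hs.2))
    (sqrt_le_sqrt (F₁_le_Fp hp hα hr hs.1.le hs.2.le))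

lemma pi_div_two_sub_arcsin_inv_le_Theta (hp : p ≤ -1) (hα : α ^ 2 ≤ 1) (hr : 1 < r) :
    π / 2 - arcsin r⁻¹ ≤ Theta p α r := by
  have hr₀ : 0 < r := by linarith
  obtain ⟨hint, hval⟩ := integral_inv_sqrt_sq_sub_sq hr₀ (by linarith) hr.le
  rw [one_div] at hval
  rw [← hval, Theta]
  refine intervalIntegral.integral_mono_on_of_le_Ioo hr.le hint
    (intervalIntegrable_inv_sqrt_Fp hp hα hr) fun s hs ↦ ?_
  have hF := (F₁_pos hs.1 hs.2).trans_le (F₁_le_Fp hp hα hr hs.1.le hs.2.le)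
  exact inv_anti₀ (sqrt_pos.2 hF)
    (sqrt_le_sqrt (Fp_le_sq_sub_sq (by linarith) hα hr (by linarith [hs.1]) hs.2.le))

end

theorem stmt_11 (p α : ℝ) (hp : p < -1) (hα₀ : 0 < α) (hα₁ : α < 1) :
    Tendsto (fun r : ℝ => Theta p α r) atTop (nhds (π / 2)) := by
  have hα : α ^ 2 ≤ 1 := by nlinarith
  have hlower : Tendsto (fun r : ℝ ↦ π / 2 - arcsin r⁻¹) atTop (𝓝 (π / 2)) := by
    simpa using ((continuous_arcsin.tendsto 0).comp tendsto_inv_atTop_zero).const_sub (π / 2)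
  refine tendsto_of_tendsto_of_tendsto_of_le_of_le' hlower tendsto_const_nhds ?_ ?_
  · filter_upwards [eventually_gt_atTop 1] with r hr
    exact pi_div_two_sub_arcsin_inv_le_Theta hp.le hα hr
  · filter_upwards [eventually_gt_atTop 1] with r hr
    exact Theta_le_pi_div_two hp.le hα hr
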